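/- arXiv:2007.07209 — 2 statements merged into one kernel-verified Lean document; each statement's English description precedes it below -/
import Mathlib

section
/- Combined robustness: For all nonzero-sum mean-payoff games G, all ε, δ > 0, all vertices v, all Player 0 strategies σ₀, and all rationals c: if ASV_G^{2δ+ε}(σ₀)(v) > c, then for every perturbed game H ∈ G^{±δ}, inf over σ₁ in the set of ε-best-responses to σ₀ in H of MP₀^H(Out_v(σ₀,σ₁)) > c − δ. -/
/-!
Since `H` has the same arena as `G`, a profile has the same outcome in both games, and along a
play every weight moves by less than `δ`, so each mean payoff moves by at most `δ`. Hence an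
`ε`-best response of Player 1 in `H` loses at most `2δ` more against the optimum when measured in
`G`: it is a `(2δ + ε)`-best response in `G`, where Player 0 gets more than `c`, and so more than
`c - δ` in `H`. Best responses in `H` exist because mean payoffs over a finite arena are bounded,
so a near-optimal response from each start vertex can be glued into a single strategy.
-/

open Filter

namespace MPG

variable {V : Type}

/-- A strategy maps histories (finite sequences of visited vertices, last = current) to a next vertex. -/
abbrev Strat (V : Type) := List V → V

/-- A bi-weighted mean-payoff game: finite directed graph with every vertex having a successor,
a partition of vertices between the players (`owner0`), and two weight functions. -/
structure Game (V : Type) where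
  E : V → V → Prop
  succ : ∀ v, ∃ v', E v v'
  owner0 : V → Bool
  w0 : V → V → ℝ
  w1 : V → V → ℝ

/-- A valid Player-0 strategy respects the edges at Player-0 vertices. -/
def Game.Valid0 (G : Game V) (σ : Strat V) : Prop :=
  ∀ (h : List V) (u : V), h.getLast? = some u → G.owner0 u = true → G.E u (σ h)

/-- A valid Player-1 strategy respects the edges at Player-1 vertices. -/
def Game.Valid1 (G : Game V) (σ : Strat V) : Prop :=
  ∀ (h : List V) (u : V), h.getLast? = some u → G.owner0 u = false → G.E u (σ h)

/-- Finite prefixes of the unique outcome of a strategy profile from `v`. -/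
def outPrefix (G : Game V) (σ0 σ1 : Strat V) (v : V) : ℕ → List V
  | 0 => [v]
  | n + 1 =>
      outPrefix G σ0 σ1 v n ++
        [if G.owner0 ((outPrefix G σ0 σ1 v n).getLastD v) then
            σ0 (outPrefix G σ0 σ1 v n)
          else σ1 (outPrefix G σ0 σ1 v n)]

/-- The unique outcome play `Out_v(σ0,σ1)`. -/
def outcome (G : Game V) (σ0 σ1 : Strat V) (v : V) (n : ℕ) : V :=
  (outPrefix G σ0 σ1 v n).getLastD v

/-- liminf mean-payoff of a play for a weight function. -/
noncomputable def mp (w : V → V → ℝ) (π : ℕ → V) : ℝ :=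
  Filter.liminf (fun k : ℕ => (∑ i ∈ Finset.range k, w (π i) (π (i + 1))) / (k : ℝ))
    Filter.atTop

/-- The ε-best-responses of Player 1 to a Player-0 strategy `σ0`. -/
def BR (G : Game V) (ε : ℝ) (σ0 : Strat V) : Set (Strat V) :=
  {σ1 | G.Valid1 σ1 ∧ ∀ (v : V) (σ1' : Strat V), G.Valid1 σ1' →
      mp G.w1 (outcome G σ0 σ1 v) > mp G.w1 (outcome G σ0 σ1' v) - ε}

/-- `ASV^ε(σ0)(v)`: value of `σ0` against ε-best responses. -/
noncomputable def ASVe (G : Game V) (ε : ℝ) (σ0 : Strat V) (v : V) : ℝ :=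
  sInf ((fun σ1 => mp G.w0 (outcome G σ0 σ1 v)) '' BR G ε σ0)

/-- `ASV^ε(v)`: the ε-adversarial Stackelberg value. -/
noncomputable def ASVeV (G : Game V) (ε : ℝ) (v : V) : ℝ :=
  sSup {x : ℝ | ∃ σ0 : Strat V, G.Valid0 σ0 ∧ x = ASVe G ε σ0 v}

/-- `ASV(σ0)(v) = sup_{ε>0} ASV^ε(σ0)(v)`. -/
noncomputable def ASVs (G : Game V) (σ0 : Strat V) (v : V) : ℝ :=
  sSup {x : ℝ | ∃ ε : ℝ, 0 < ε ∧ x = ASVe G ε σ0 v}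

/-- Zero-sum worst-case value of a Player-0 strategy. -/
noncomputable def Val (G : Game V) (σ0 : Strat V) (v : V) : ℝ :=
  sInf {x : ℝ | ∃ σ1 : Strat V, G.Valid1 σ1 ∧ x = mp G.w0 (outcome G σ0 σ1 v)}

/-- `H ∈ G^{±δ}`: same arena, every edge weight changed by strictly less than δ. -/
def Perturbed (G H : Game V) (δ : ℝ) : Prop :=
  H.E = G.E ∧ H.owner0 = G.owner0 ∧
    ∀ u v : V, G.E u v → |H.w0 u v - G.w0 u v| < δ ∧ |H.w1 u v - G.w1 u v| < δ

/-- A finite-memory strategy: realizable by a finite-state machine reading the history. -/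
def FinMem (σ : Strat V) : Prop :=
  ∃ (M : Type) (_ : Fintype M) (m0 : M) (upd : M → V → M) (o : M → V),
    ∀ h : List V, σ h = o (List.foldl upd m0 h)

/-- A vertex is `(c,d)^ε`-bad if Player 1 can enforce `MP₀ ≤ c ∧ MP₁ > d - ε` from it. -/
def Bad (G : Game V) (c d ε : ℝ) (v : V) : Prop :=
  ∃ σ1 : Strat V, G.Valid1 σ1 ∧ ∀ σ0 : Strat V, G.Valid0 σ0 →
    mp G.w0 (outcome G σ0 σ1 v) ≤ c ∧ mp G.w1 (outcome G σ0 σ1 v) > d - ε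

end MPG

namespace MPG

variable {V : Type}

section Outcome

lemma outPrefix_head? (G : Game V) (σ0 σ1 : Strat V) (v : V) (n : ℕ) :
    (outPrefix G σ0 σ1 v n).head? = some v := by
  induction n with
  | zero => rfl
  | succ n ih =>
    obtain ⟨t, ht⟩ := List.head?_eq_some_iff.mp ih
    simp only [outPrefix, ht, List.cons_append, List.head?_cons]

lemma outPrefix_getLast? (G : Game V) (σ0 σ1 : Strat V) (v : V) (n : ℕ) :
    (outPrefix G σ0 σ1 v n).getLast? = some (outcome G σ0 σ1 v n) := by
  have hne : outPrefix G σ0 σ1 v n ≠ [] := fun hnil => by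
    simpa [hnil] using outPrefix_head? G σ0 σ1 v n
  rw [outcome, List.getLastD_eq_getLast?, List.getLast?_eq_some_getLast hne]
  rfl

lemma outcome_succ (G : Game V) (σ0 σ1 : Strat V) (v : V) (n : ℕ) :
    outcome G σ0 σ1 v (n + 1) =
      if G.owner0 (outcome G σ0 σ1 v n) then σ0 (outPrefix G σ0 σ1 v n)
      else σ1 (outPrefix G σ0 σ1 v n) :=
  List.getLastD_concat

lemma Game.E_outcome_succ (G : Game V) {σ0 σ1 : Strat V} (h0 : G.Valid0 σ0)
    (h1 : G.Valid1 σ1) (v : V) (n : ℕ) :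
    G.E (outcome G σ0 σ1 v n) (outcome G σ0 σ1 v (n + 1)) := by
  rw [outcome_succ]
  cases hown : G.owner0 (outcome G σ0 σ1 v n)
  · exact h1 _ _ (outPrefix_getLast? G σ0 σ1 v n) hown
  · exact h0 _ _ (outPrefix_getLast? G σ0 σ1 v n) hown

lemma outcome_congr_owner0 {G H : Game V} (hown : H.owner0 = G.owner0)
    (σ0 σ1 : Strat V) (v : V) : outcome H σ0 σ1 v = outcome G σ0 σ1 v := by
  have hpre : ∀ n, outPrefix H σ0 σ1 v n = outPrefix G σ0 σ1 v n := by
    intro n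
    induction n with
    | zero => rfl
    | succ n ih => simp only [outPrefix, ih, hown]
  funext n
  simp only [outcome, hpre]

lemma outcome_congr_strat (G : Game V) (σ0 : Strat V) {σ1 σ1' : Strat V} (v : V)
    (hagree : ∀ h : List V, h.head? = some v → σ1 h = σ1' h) :
    outcome G σ0 σ1 v = outcome G σ0 σ1' v := by
  have hpre : ∀ n, outPrefix G σ0 σ1 v n = outPrefix G σ0 σ1' v n := by
    intro n
    induction n with
    | zero => rfl
    | succ n ih =>
      simp only [outPrefix, ← ih, hagree _ (outPrefix_head? G σ0 σ1 v n)]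
  funext n
  simp only [outcome, hpre]

end Outcome

section MeanPayoff

noncomputable def avg (w : V → V → ℝ) (π : ℕ → V) (k : ℕ) : ℝ :=
  (∑ i ∈ Finset.range k, w (π i) (π (i + 1))) / k

lemma mp_eq_liminf_avg (w : V → V → ℝ) (π : ℕ → V) :
    mp w π = liminf (avg w π) atTop := rfl

variable {w w' : V → V → ℝ} {π : ℕ → V}

lemma avg_mono (h : ∀ i, w (π i) (π (i + 1)) ≤ w' (π i) (π (i + 1))) (k : ℕ) :
    avg w π k ≤ avg w' π k := by
  unfold avg
  gcongr with i
  exact h i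

lemma avg_add_const (δ : ℝ) {k : ℕ} (hk : k ≠ 0) :
    avg (fun u u' => w u u' + δ) π k = avg w π k + δ := by
  unfold avg
  rw [Finset.sum_add_distrib, Finset.sum_const, Finset.card_range, nsmul_eq_mul]
  field_simp

lemma exists_abs_avg_le [Finite V] (w : V → V → ℝ) : ∃ B, ∀ π k, |avg w π k| ≤ B := by
  obtain ⟨B, hB⟩ := Finite.bddAbove_range (fun p : V × V => |w p.1 p.2|)
  refine ⟨max B 0, fun π k => ?_⟩
  rw [avg, abs_div, Nat.abs_cast]
  refine div_le_of_le_mul₀ k.cast_nonneg (le_max_right _ _) ?_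
  calc |∑ i ∈ Finset.range k, w (π i) (π (i + 1))|
      ≤ ∑ i ∈ Finset.range k, |w (π i) (π (i + 1))| := Finset.abs_sum_le_sum_abs _ _
    _ ≤ ∑ _i ∈ Finset.range k, max B 0 :=
      Finset.sum_le_sum fun i _ => (hB ⟨(π i, π (i + 1)), rfl⟩).trans (le_max_left _ _)
    _ = max B 0 * k := by rw [Finset.sum_const, Finset.card_range, nsmul_eq_mul, mul_comm]

lemma isBoundedUnder_le_avg [Finite V] (w : V → V → ℝ) (π : ℕ → V) :
    IsBoundedUnder (· ≤ ·) atTop (avg w π) :=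
  let ⟨B, hB⟩ := exists_abs_avg_le w
  isBoundedUnder_of ⟨B, fun k => (abs_le.mp (hB π k)).2⟩

lemma isBoundedUnder_ge_avg [Finite V] (w : V → V → ℝ) (π : ℕ → V) :
    IsBoundedUnder (· ≥ ·) atTop (avg w π) :=
  let ⟨B, hB⟩ := exists_abs_avg_le w
  isBoundedUnder_of ⟨-B, fun k => (abs_le.mp (hB π k)).1⟩

lemma bddBelow_range_mp [Finite V] (w : V → V → ℝ) : BddBelow (Set.range (mp w)) := by
  obtain ⟨B, hB⟩ := exists_abs_avg_le w
  refine ⟨-B, ?_⟩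
  rintro _ ⟨π, rfl⟩
  exact le_liminf_of_le (isBoundedUnder_le_avg w π).isCoboundedUnder_ge
    (.of_forall fun k => (abs_le.mp (hB π k)).1)

lemma bddAbove_range_mp [Finite V] (w : V → V → ℝ) : BddAbove (Set.range (mp w)) := by
  obtain ⟨B, hB⟩ := exists_abs_avg_le w
  refine ⟨B, ?_⟩
  rintro _ ⟨π, rfl⟩
  exact liminf_le_of_frequently_le (.of_forall fun k => (abs_le.mp (hB π k)).2)
    (isBoundedUnder_ge_avg w π)

lemma mp_mono [Finite V] (h : ∀ i, w (π i) (π (i + 1)) ≤ w' (π i) (π (i + 1))) :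
    mp w π ≤ mp w' π :=
  liminf_le_liminf (.of_forall (avg_mono h)) (isBoundedUnder_ge_avg w π)
    (isBoundedUnder_le_avg w' π).isCoboundedUnder_ge

lemma mp_add_const [Finite V] (δ : ℝ) : mp (fun u u' => w u u' + δ) π = mp w π + δ := by
  rw [mp_eq_liminf_avg, mp_eq_liminf_avg,
    liminf_congr ((eventually_ne_atTop 0).mono fun k hk => avg_add_const δ hk)]
  exact liminf_add_const atTop _ δ (isBoundedUnder_le_avg w π).isCoboundedUnder_ge
    (isBoundedUnder_ge_avg w π)

lemma mp_le_mp_add [Finite V] {δ : ℝ}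
    (h : ∀ i, w (π i) (π (i + 1)) ≤ w' (π i) (π (i + 1)) + δ) :
    mp w π ≤ mp w' π + δ :=
  mp_add_const (w := w') δ ▸ mp_mono h

lemma abs_mp_sub_mp_le [Finite V] {δ : ℝ}
    (h : ∀ i, |w' (π i) (π (i + 1)) - w (π i) (π (i + 1))| ≤ δ) :
    |mp w' π - mp w π| ≤ δ := by
  have upper : mp w' π ≤ mp w π + δ := mp_le_mp_add fun i => by linarith [(abs_le.mp (h i)).2]
  have lower : mp w π ≤ mp w' π + δ := mp_le_mp_add fun i => by linarith [(abs_le.mp (h i)).1]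
  rw [abs_sub_le_iff]
  constructor <;> linarith

end MeanPayoff

section BestResponse

lemma Game.exists_valid1 [Nonempty V] (G : Game V) : ∃ σ : Strat V, G.Valid1 σ := by
  refine ⟨fun h => (G.succ (h.getLastD (Classical.arbitrary V))).choose, ?_⟩
  intro h u hu _
  simp only [List.getLastD_eq_getLast?, hu, Option.getD_some]
  exact (G.succ u).choose_spec

lemma Game.exists_valid1_forall_outcome_eq [Nonempty V] (G : Game V) (σ0 : Strat V)
    (σ : V → Strat V) (hσ : ∀ u, G.Valid1 (σ u)) :
    ∃ τ : Strat V, G.Valid1 τ ∧ ∀ u, outcome G σ0 τ u = outcome G σ0 (σ u) u := by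
  refine ⟨fun h => σ (h.headD (Classical.arbitrary V)) h, fun h u => hσ _ h u, fun u => ?_⟩
  refine outcome_congr_strat G σ0 u fun h hh => ?_
  simp only [List.headD_eq_head?_getD, hh, Option.getD_some]

lemma BR_nonempty [Finite V] [Nonempty V] (G : Game V) {ε : ℝ} (hε : 0 < ε) (σ0 : Strat V) :
    (BR G ε σ0).Nonempty := by
  let A : V → Set ℝ := fun u =>
    (fun σ1 => mp G.w1 (outcome G σ0 σ1 u)) '' {σ1 | G.Valid1 σ1}
  have hA_bdd : ∀ u, BddAbove (A u) := fun u =>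
    (bddAbove_range_mp G.w1).mono (by rintro _ ⟨σ1, -, rfl⟩; exact ⟨_, rfl⟩)
  have near_opt : ∀ u, ∃ σ1 : Strat V, G.Valid1 σ1 ∧
      sSup (A u) - ε < mp G.w1 (outcome G σ0 σ1 u) := by
    intro u
    obtain ⟨σb, hσb⟩ := G.exists_valid1
    obtain ⟨_, ⟨σ1, hσ1, rfl⟩, hlt⟩ :=
      exists_lt_of_lt_csSup (⟨_, σb, hσb, rfl⟩ : (A u).Nonempty) (sub_lt_self _ hε)
    exact ⟨σ1, hσ1, hlt⟩
  choose σ hσ hσ_opt using near_opt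
  obtain ⟨τ, hτ, hτ_out⟩ := G.exists_valid1_forall_outcome_eq σ0 σ hσ
  refine ⟨τ, hτ, fun u σ1' hσ1' => ?_⟩
  rw [hτ_out u]
  linarith [hσ_opt u, le_csSup (hA_bdd u) ⟨σ1', hσ1', rfl⟩]

end BestResponse

namespace Perturbed

variable {G H : Game V} {δ : ℝ}

lemma valid1_iff (hP : Perturbed G H δ) (σ : Strat V) : H.Valid1 σ ↔ G.Valid1 σ := by
  unfold Game.Valid1
  rw [hP.1, hP.2.1]

lemma outcome_eq (hP : Perturbed G H δ) (σ0 σ1 : Strat V) (v : V) :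
    outcome H σ0 σ1 v = outcome G σ0 σ1 v :=
  outcome_congr_owner0 hP.2.1 σ0 σ1 v

lemma abs_mp_w0_sub_le [Finite V] (hP : Perturbed G H δ) {π : ℕ → V}
    (hπ : ∀ i, G.E (π i) (π (i + 1))) : |mp H.w0 π - mp G.w0 π| ≤ δ :=
  abs_mp_sub_mp_le fun i => (hP.2.2 _ _ (hπ i)).1.le

lemma abs_mp_w1_sub_le [Finite V] (hP : Perturbed G H δ) {π : ℕ → V}
    (hπ : ∀ i, G.E (π i) (π (i + 1))) : |mp H.w1 π - mp G.w1 π| ≤ δ :=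
  abs_mp_sub_mp_le fun i => (hP.2.2 _ _ (hπ i)).2.le

lemma BR_subset [Finite V] (hP : Perturbed G H δ) {σ0 : Strat V} (hσ0 : G.Valid0 σ0)
    (ε : ℝ) : BR H ε σ0 ⊆ BR G (2 * δ + ε) σ0 := by
  rintro σ1 ⟨hσ1, hbest⟩
  rw [hP.valid1_iff] at hσ1
  refine ⟨hσ1, fun u σ1' hσ1' => ?_⟩
  have hH := hbest u σ1' ((hP.valid1_iff σ1').mpr hσ1')
  rw [hP.outcome_eq, hP.outcome_eq] at hH
  have h1 := abs_le.mp (hP.abs_mp_w1_sub_le (G.E_outcome_succ hσ0 hσ1 u))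
  have h1' := abs_le.mp (hP.abs_mp_w1_sub_le (G.E_outcome_succ hσ0 hσ1' u))
  linarith [h1.2, h1'.1]

lemma ASVe_sub_le [Finite V] (hP : Perturbed G H δ) {ε : ℝ} (hε : 0 < ε) {σ0 : Strat V}
    (hσ0 : G.Valid0 σ0) (v : V) : ASVe G (2 * δ + ε) σ0 v - δ ≤ ASVe H ε σ0 v := by
  have : Nonempty V := ⟨v⟩
  refine le_csInf ((BR_nonempty H hε σ0).image _) ?_
  rintro _ ⟨σ1, hσ1, rfl⟩
  have hσ1G := hP.BR_subset hσ0 ε hσ1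
  have hinf : ASVe G (2 * δ + ε) σ0 v ≤ mp G.w0 (outcome G σ0 σ1 v) :=
    csInf_le ((bddBelow_range_mp G.w0).mono (by rintro _ ⟨σ1, -, rfl⟩; exact ⟨_, rfl⟩))
      ⟨σ1, hσ1G, rfl⟩
  have h0 := abs_le.mp (hP.abs_mp_w0_sub_le (G.E_outcome_succ hσ0 hσ1G.1 v))
  simp only [hP.outcome_eq]
  linarith [h0.1]

end Perturbed

end MPG

theorem stmt6_general {V : Type} [Fintype V] (G : MPG.Game V) (ε δ : ℝ) (hε : 0 < ε)
    (v : V) (σ0 : MPG.Strat V) (hσ0 : G.Valid0 σ0) (c : ℚ)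
    (h : MPG.ASVe G (2 * δ + ε) σ0 v > (c : ℝ)) :
    ∀ H : MPG.Game V, MPG.Perturbed G H δ →
      MPG.ASVe H ε σ0 v > (c : ℝ) - δ := fun H hP => by
  linarith [hP.ASVe_sub_le hε hσ0 v]

/-- combined robustness of `ASV^ε`. -/
theorem stmt6 {V : Type} [Fintype V] (G : MPG.Game V) (ε δ : ℝ) (hε : 0 < ε) (hδ : 0 < δ)
    (v : V) (σ0 : MPG.Strat V) (hσ0 : G.Valid0 σ0) (c : ℚ)
    (h : MPG.ASVe G (2 * δ + ε) σ0 v > (c : ℝ)) :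
    ∀ H : MPG.Game V, MPG.Perturbed G H δ →
      MPG.ASVe H ε σ0 v > (c : ℝ) - δ :=
  stmt6_general G ε δ hε v σ0 hσ0 c h
end

section
/- Pointwise-minimum convex hull: Let S be a finite set of vectors in ℚ^d. Define f_min(X) for a finite nonempty X ⊆ ℚ^d as the coordinatewise minimum of X, and F_min(T) = { f_min(P) : P a finite nonempty subset of T }. Then for the convex hull CH(S) of S, the set F_min(CH(S)) equals CH(F_min(S)) when d = 2. -/
open Filter

/-- Convex hull (by convex combinations) of a set of rational planar vectors. -/
def CH2 (S : Set (Fin 2 → ℚ)) : Set (Fin 2 → ℚ) :=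
  {y | ∃ (t : Finset (Fin 2 → ℚ)) (a : (Fin 2 → ℚ) → ℚ),
    ↑t ⊆ S ∧ (∀ x ∈ t, 0 ≤ a x) ∧ ∑ x ∈ t, a x = 1 ∧ y = ∑ x ∈ t, a x • x}

/-- Coordinatewise minimum of a finite nonempty set of planar vectors. -/
noncomputable def fmin2 (P : Finset (Fin 2 → ℚ)) (h : P.Nonempty) : Fin 2 → ℚ :=
  fun i => P.inf' h (fun x => x i)

/-- `F_min(T)`: all coordinatewise minima of finite nonempty subsets of `T`. -/
def Fmin2 (T : Set (Fin 2 → ℚ)) : Set (Fin 2 → ℚ) :=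
  {y | ∃ (P : Finset (Fin 2 → ℚ)) (h : P.Nonempty), ↑P ⊆ T ∧ y = fmin2 P h}

/-!
Read `CH2` as `convexHull ℚ` and `Fmin2` as `infClosure` for the pointwise order on `Fin 2 → ℚ`.

For `⊇`: the inf-closure of a convex set is convex (in any dimension), because for `a ≥ 0` the map
`x ↦ a • x + z` preserves `⊓`.

For `⊆`: in the plane the minimum of finitely many points is the minimum `u ⊓ v` of two of them,
one attaining each coordinate. For `u, v ∈ CH(S)`, concavity of `⊓` yields `w ∈ CH(F_min(S))` with
`w ≤ u ⊓ v`, and then the corner `u ⊓ v = (u₀, v₁)` lies in the triangle `u v w`.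
-/

section PiOrder

variable {ι 𝕜 : Type*} [Ring 𝕜] [LinearOrder 𝕜] [IsOrderedRing 𝕜]

theorem smul_inf_of_nonneg {c : 𝕜} (hc : 0 ≤ c) (x y : ι → 𝕜) :
    c • (x ⊓ y) = c • x ⊓ c • y := by
  funext i
  simp [mul_min_of_nonneg _ _ hc]

theorem smul_inf_add_smul_inf_le {a b : 𝕜} (ha : 0 ≤ a) (hb : 0 ≤ b) (hab : a + b = 1)
    (x y z : ι → 𝕜) : a • (x ⊓ z) + b • (y ⊓ z) ≤ (a • x + b • y) ⊓ z := by
  refine le_inf (by gcongr <;> exact inf_le_left) ?_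
  calc a • (x ⊓ z) + b • (y ⊓ z) ≤ a • z + b • z := by gcongr <;> exact inf_le_right
    _ = z := Convex.combo_self hab z

theorem convex_infClosure {C : Set (ι → 𝕜)} (hC : Convex 𝕜 C) : Convex 𝕜 (infClosure C) := by
  intro x hx y hy a b ha hb hab
  have hleft (y : ι → 𝕜) (hy : y ∈ C) : infClosure C ⊆ {x | a • x + b • y ∈ infClosure C} := by
    refine infClosure_min (fun x hx => subset_infClosure (hC hx hy ha hb hab)) ?_
    intro x hx x' hx'
    simp only [Set.mem_ofPred_eq, smul_inf_of_nonneg ha, inf_add] at hx hx' ⊢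
    exact infClosed_infClosure hx hx'
  have hright : infClosure C ⊆ {y | a • x + b • y ∈ infClosure C} := by
    refine infClosure_min (fun y hy => hleft y hy hx) ?_
    intro y hy y' hy'
    simp only [Set.mem_ofPred_eq, smul_inf_of_nonneg hb, add_inf] at hy hy' ⊢
    exact infClosed_infClosure hy hy'
  exact hright hy

theorem convex_setOf_exists_le_inf {K : Set (ι → 𝕜)} (hK : Convex 𝕜 K) (v : ι → 𝕜) :
    Convex 𝕜 {u | ∃ w ∈ K, w ≤ u ⊓ v} := by
  rintro u₁ ⟨w₁, hw₁, h₁⟩ u₂ ⟨w₂, hw₂, h₂⟩ a b ha hb hab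
  refine ⟨a • w₁ + b • w₂, hK hw₁ hw₂ ha hb hab, ?_⟩
  calc a • w₁ + b • w₂ ≤ a • (u₁ ⊓ v) + b • (u₂ ⊓ v) := by gcongr
    _ ≤ (a • u₁ + b • u₂) ⊓ v := smul_inf_add_smul_inf_le ha hb hab u₁ u₂ v

theorem exists_mem_convexHull_infClosure_le_inf {S : Set (ι → 𝕜)} {u v : ι → 𝕜}
    (hu : u ∈ convexHull 𝕜 S) (hv : v ∈ convexHull 𝕜 S) :
    ∃ w ∈ convexHull 𝕜 (infClosure S), w ≤ u ⊓ v := by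
  have hK := convex_convexHull 𝕜 (infClosure S)
  have hS : ∀ x ∈ S, ∀ u ∈ convexHull 𝕜 S, ∃ w ∈ convexHull 𝕜 (infClosure S), w ≤ u ⊓ x :=
    fun x hx => convexHull_min (fun u hu => ⟨u ⊓ x, subset_convexHull 𝕜 _
      (inf_mem_infClosure hu hx), le_rfl⟩) (convex_setOf_exists_le_inf hK x)
  have hv' : v ∈ {v | ∃ w ∈ convexHull 𝕜 (infClosure S), w ≤ v ⊓ u} :=
    convexHull_min (fun x hx => by
      show ∃ w ∈ _, w ≤ x ⊓ u
      rw [inf_comm]; exact hS x hx u hu) (convex_setOf_exists_le_inf hK u) hv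
  simpa only [Set.mem_ofPred_eq, inf_comm v u] using hv'

theorem convexHull_infClosure_subset {S : Set (ι → 𝕜)} :
    convexHull 𝕜 (infClosure S) ⊆ infClosure (convexHull 𝕜 S) :=
  (convex_infClosure (convex_convexHull 𝕜 S)).convexHull_subset_iff.2
    (infClosure_mono (subset_convexHull 𝕜 S))

end PiOrder

theorem exists_inf_eq_of_mem_infClosure_fin_two {α : Type*} [LinearOrder α] {C : Set (Fin 2 → α)}
    {y : Fin 2 → α} (hy : y ∈ infClosure C) : ∃ u ∈ C, ∃ v ∈ C, y = u ⊓ v := by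
  obtain ⟨P, hP, hPC, rfl⟩ := hy
  obtain ⟨u, hu, hu0⟩ := P.exists_mem_eq_inf' hP (· 0)
  obtain ⟨v, hv, hv1⟩ := P.exists_mem_eq_inf' hP (· 1)
  have h0 : P.inf' hP id 0 = (u ⊓ v) 0 := by
    rw [Finset.inf'_apply, Pi.inf_apply]
    exact hu0.trans (min_eq_left (hu0 ▸ P.inf'_le (· 0) hv)).symm
  have h1 : P.inf' hP id 1 = (u ⊓ v) 1 := by
    rw [Finset.inf'_apply, Pi.inf_apply]
    exact hv1.trans (min_eq_right (hv1 ▸ P.inf'_le (· 1) hu)).symm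
  refine ⟨u, hPC hu, v, hPC hv, funext fun i => ?_⟩
  fin_cases i
  exacts [h0, h1]

section Plane

variable {𝕜 : Type*} [Field 𝕜] [LinearOrder 𝕜] [IsStrictOrderedRing 𝕜]

theorem inf_mem_convexHull_triple_of_lt {u v w : Fin 2 → 𝕜} (h0 : u 0 < v 0) (h1 : v 1 < u 1)
    (hw : w ≤ u ⊓ v) : u ⊓ v ∈ convexHull 𝕜 {u, v, w} := by
  have hw0 : w 0 ≤ u 0 := (hw 0).trans_eq (min_eq_left h0.le)
  have hw1 : w 1 ≤ v 1 := (hw 1).trans_eq (min_eq_right h1.le)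
  have hA : 0 < v 0 - u 0 := sub_pos.2 h0
  have hB : 0 ≤ u 0 - w 0 := sub_nonneg.2 hw0
  have hC : 0 < u 1 - v 1 := sub_pos.2 h1
  have hD : 0 ≤ v 1 - w 1 := sub_nonneg.2 hw1
  -- barycentric coordinates of `u ⊓ v = ![u 0, v 1]` in the triangle `u v w`, of doubled area `d`
  set d := (v 0 - u 0) * (v 1 - w 1) + (u 0 - w 0) * (u 1 - v 1) + (v 0 - u 0) * (u 1 - v 1)
  have hd : 0 < d := by positivity
  refine mem_convexHull_of_exists_fintype
    ![(v 0 - u 0) * (v 1 - w 1) / d, (u 0 - w 0) * (u 1 - v 1) / d, (v 0 - u 0) * (u 1 - v 1) / d]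
    ![u, v, w] (fun i => ?_) ?_ (fun i => ?_) ?_
  · fin_cases i <;>
      simp only [Fin.zero_eta, Fin.mk_one, Fin.reduceFinMk, Matrix.cons_val_zero,
        Matrix.cons_val_one, Matrix.cons_val] <;>
      positivity
  · rw [Fin.sum_univ_three]
    simp only [Matrix.cons_val_zero, Matrix.cons_val_one, Matrix.cons_val_two, Matrix.head_cons,
      Matrix.tail_cons, ← add_div]
    exact div_self hd.ne'
  · fin_cases i <;> simp
  · funext i
    fin_cases i <;>
      simp only [Fin.zero_eta, Fin.mk_one, Finset.sum_apply, Pi.smul_apply, smul_eq_mul,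
        Fin.sum_univ_three, Matrix.cons_val_zero, Matrix.cons_val_one, Matrix.cons_val,
        Pi.inf_apply, h0.le, h1.le, inf_of_le_left, inf_of_le_right] <;>
      field_simp <;> ring

theorem inf_mem_convexHull_triple {u v w : Fin 2 → 𝕜} (hw : w ≤ u ⊓ v) :
    u ⊓ v ∈ convexHull 𝕜 {u, v, w} := by
  by_cases huv : u ≤ v
  · rw [inf_eq_left.2 huv]
    exact subset_convexHull 𝕜 _ (by simp)
  by_cases hvu : v ≤ u
  · rw [inf_eq_right.2 hvu]
    exact subset_convexHull 𝕜 _ (by simp)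
  simp only [Pi.le_def, Fin.forall_fin_two, not_and_or, not_le] at huv hvu
  rcases huv with h0 | h1 <;> rcases hvu with h0' | h1'
  · exact (lt_asymm h0 h0').elim
  · rw [inf_comm, Set.insert_comm]
    exact inf_mem_convexHull_triple_of_lt h0 h1' (inf_comm u v ▸ hw)
  · exact inf_mem_convexHull_triple_of_lt h0' h1 hw
  · exact (lt_asymm h1 h1').elim

theorem infClosure_convexHull_subset {S : Set (Fin 2 → 𝕜)} :
    infClosure (convexHull 𝕜 S) ⊆ convexHull 𝕜 (infClosure S) := by
  intro y hy
  obtain ⟨u, hu, v, hv, rfl⟩ := exists_inf_eq_of_mem_infClosure_fin_two hy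
  obtain ⟨w, hw, hwuv⟩ := exists_mem_convexHull_infClosure_le_inf hu hv
  have hS : convexHull 𝕜 S ⊆ convexHull 𝕜 (infClosure S) := convexHull_mono subset_infClosure
  refine (convex_convexHull 𝕜 _).convexHull_subset_iff.2 ?_ (inf_mem_convexHull_triple hwuv)
  simp [Set.insert_subset_iff, hS hu, hS hv, hw]

end Plane

theorem CH2_eq_convexHull (T : Set (Fin 2 → ℚ)) : CH2 T = convexHull ℚ T := by
  ext y
  rw [convexHull_eq_union_convexHull_finite_subsets]
  simp only [CH2, Set.mem_iUnion, Finset.mem_convexHull', exists_prop, Set.mem_ofPred_eq]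
  constructor
  · rintro ⟨t, a, htT, ha, hsum, rfl⟩
    exact ⟨t, htT, a, ha, hsum, rfl⟩
  · rintro ⟨t, htT, a, ha, hsum, rfl⟩
    exact ⟨t, a, htT, ha, hsum, rfl⟩

theorem Fmin2_eq_infClosure (T : Set (Fin 2 → ℚ)) : Fmin2 T = infClosure T := by
  have hfmin (P : Finset (Fin 2 → ℚ)) (hP : P.Nonempty) : fmin2 P hP = P.inf' hP id :=
    funext fun i => (Finset.inf'_apply hP id i).symm
  ext y
  constructor
  · rintro ⟨P, hP, hPT, rfl⟩
    exact ⟨P, hP, hPT, (hfmin P hP).symm⟩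
  · rintro ⟨P, hP, hPT, rfl⟩
    exact ⟨P, hP, hPT, (hfmin P hP).symm⟩

/-- in dimension 2, `F_min(CH(S)) = CH(F_min(S))` for finite `S`. -/
theorem stmt11 (S : Finset (Fin 2 → ℚ)) :
    Fmin2 (CH2 ↑S) = CH2 (Fmin2 ↑S) := by
  rw [Fmin2_eq_infClosure, CH2_eq_convexHull, CH2_eq_convexHull, Fmin2_eq_infClosure]
  exact infClosure_convexHull_subset.antisymm convexHull_infClosure_subset
end
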